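/- arXiv:2104.12761 — 2 statements merged into one kernel-verified Lean document; each statement's English description precedes it below -/
import Mathlib

section
/- Consider a continuous convex smooth game in which every player i runs OptDA with a regularizer h_i on X_i and the adaptive learning rate. Then for every bounded set K ⊆ Π_j X_j there exists a constant C ∈ ℝ such that for all T ≥ 1 and all a = (a_1,…,a_N) ∈ K, the social regret satisfies Σ_{i=1}^{N} Σ_{t=1}^{T} (ℓ_i(x_t) − ℓ_i(a_i, x_t^{−i})) ≤ C, where x_t = (X_{t+1/2}^j)_j is the profile of realized actions at round t and (a_i, x_t^{−i}) denotes the profile x_t with its i-th component replaced by a_i. -/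
/-!
Each player's OptDA regret against a comparator `a` is at most
`η_{T+1} (h a - h X_1) + ∑ ‖g_t - g_{t-1}‖² / η_t` minus a quarter of the squared moves of its
iterates. Lipschitz feedback bounds `‖g_t - g_{t-1}‖²` by the squared move `‖x_t - x_{t-1}‖²` of
the joint profile, and summed over rounds these moves are at most twice the total squared moves
of all players. Once the adaptive rate has passed a threshold `θ` the variation terms are therefore
absorbed by the negative movement terms, while the rate itself grows only like the square root `√Q`
of the total profile movement `Q`. Summing over the players leaves `A + B √Q - Q / 16 ≤ A + 4 B²`.
-/

open scoped RealInnerProductSpace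
open Filter Finset Topology

noncomputable section

/-- Bregman divergence of a regularizer `h` with gradient map `Gh`. -/
def breg {F : Type*} [NormedAddCommGroup F] [InnerProductSpace ℝ F]
    (h : F → ℝ) (Gh : F → F) (p x : F) : ℝ :=
  h p - h x - ⟪Gh x, p - x⟫

/-- `h` is a regularizer on `X`: a convex differentiable function with gradient map `Gh`
that is `1`-strongly convex on `X`. -/
structure IsRegularizer {F : Type*} [NormedAddCommGroup F] [InnerProductSpace ℝ F]
    (X : Set F) (h : F → ℝ) (Gh : F → F) : Prop where
  convex : ConvexOn ℝ Set.univ h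
  grad : ∀ x : F, HasFDerivAt h (innerSL ℝ (Gh x)) x
  strong : StrongConvexOn X 1 h

/-- The adaptive learning rate `η_t = √(1 + ∑_{s=1}^{t-1} ‖g_s - g_{s-1}‖²)`. -/
def adaEta {F : Type*} [NormedAddCommGroup F] [InnerProductSpace ℝ F]
    (g : ℕ → F) (t : ℕ) : ℝ :=
  Real.sqrt (1 + ∑ s ∈ Finset.Ico 1 t, ‖g s - g (s - 1)‖ ^ 2)

/-- OptDA iterates: `Z t` is the base state `X_t` and `W t` is the played action `X_{t+1/2}`,
for feedback `g` (with `g 0 = 0`) and positive nondecreasing learning rates `η`. -/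
structure IsOptDA {F : Type*} [NormedAddCommGroup F] [InnerProductSpace ℝ F]
    (X : Set F) (h : F → ℝ) (Gh : F → F)
    (η : ℕ → ℝ) (g : ℕ → F) (Z W : ℕ → F) : Prop where
  g_zero : g 0 = 0
  eta_pos : ∀ t : ℕ, 1 ≤ t → 0 < η t
  eta_mono : ∀ t : ℕ, 1 ≤ t → η t ≤ η (t + 1)
  base_mem : ∀ t : ℕ, 1 ≤ t → Z t ∈ X
  lead_mem : ∀ t : ℕ, 1 ≤ t → W t ∈ X
  base_min : ∀ t : ℕ, 1 ≤ t → ∀ p ∈ X,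
    ⟪∑ s ∈ Finset.Ico 1 t, g s, Z t⟫ + η t * h (Z t)
      ≤ ⟪∑ s ∈ Finset.Ico 1 t, g s, p⟫ + η t * h p
  lead_min : ∀ t : ℕ, 1 ≤ t → ∀ p ∈ X,
    ⟪g (t - 1), W t⟫ + η t * breg h Gh (W t) (Z t)
      ≤ ⟪g (t - 1), p⟫ + η t * breg h Gh p (Z t)

variable {ι : Type*} [Fintype ι] [DecidableEq ι] {E : ι → Type*}
  [∀ i, NormedAddCommGroup (E i)] [∀ i, InnerProductSpace ℝ (E i)]
  [∀ i, FiniteDimensional ℝ (E i)]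

/-- The profile of actions played at round `t`, as a point of the joint space `PiLp 2 E`
(whose norm is the product norm `‖x‖ = √(∑ j ‖x j‖²)`). -/
def profileAt (W : ∀ i, ℕ → E i) (t : ℕ) : PiLp 2 E := WithLp.toLp 2 (fun j => W j t)

/-- A continuous convex smooth game: each player `i` has a nonempty closed convex action set
`X i`, a continuous loss `L i` convex in the `i`-th variable, and a Lipschitz continuous map
`V i` selecting subgradients of `L i` in the `i`-th variable on the joint action space. -/
structure ConvexGame (X : ∀ i, Set (E i)) (L : ι → PiLp 2 E → ℝ)
    (V : ∀ i, PiLp 2 E → E i) : Prop where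
  nonempty : ∀ i, (X i).Nonempty
  closed : ∀ i, IsClosed (X i)
  convexSet : ∀ i, Convex ℝ (X i)
  contLoss : ∀ i, Continuous (L i)
  convexLoss : ∀ i, ∀ x : PiLp 2 E,
    ConvexOn ℝ Set.univ fun p : E i => L i (WithLp.toLp 2 (Function.update x i p))
  lipschitzV : ∀ i, ∃ K : NNReal, LipschitzWith K (V i)
  subgrad : ∀ i, ∀ x : PiLp 2 E, (∀ j, x j ∈ X j) → ∀ p ∈ X i,
    L i x + ⟪V i x, p - x i⟫ ≤ L i (WithLp.toLp 2 (Function.update x i p))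

/-- `x` is a Nash equilibrium of the game. -/
def IsNashEq (X : ∀ i, Set (E i)) (L : ι → PiLp 2 E → ℝ) (x : PiLp 2 E) : Prop :=
  (∀ i, x i ∈ X i) ∧ ∀ i, ∀ p ∈ X i, L i x ≤ L i (WithLp.toLp 2 (Function.update x i p))

/-- The game is variationally stable. -/
def VarStable (X : ∀ i, Set (E i)) (L : ι → PiLp 2 E → ℝ)
    (V : ∀ i, PiLp 2 E → E i) : Prop :=
  (∃ xs : PiLp 2 E, IsNashEq X L xs) ∧
    ∀ x : PiLp 2 E, (∀ j, x j ∈ X j) → ∀ xs : PiLp 2 E, IsNashEq X L xs →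
      0 ≤ ∑ i, ⟪V i x, x i - xs i⟫

/-- Every player `i` runs OptDA with regularizer `h i` and the adaptive learning rate,
the feedback being the individual gradient `V i` evaluated at the realized profile. -/
structure AllOptDA (X : ∀ i, Set (E i)) (V : ∀ i, PiLp 2 E → E i)
    (h : ∀ i, E i → ℝ) (Gh : ∀ i, E i → E i)
    (η : ∀ i, ℕ → ℝ) (g : ∀ i, ℕ → E i) (Z W : ∀ i, ℕ → E i) : Prop where
  reg : ∀ i, IsRegularizer (X i) (h i) (Gh i)
  g_zero : ∀ i, g i 0 = 0
  feedback : ∀ i, ∀ t : ℕ, 1 ≤ t → g i t = V i (profileAt W t)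
  rate : ∀ i t, η i t = adaEta (g i) t
  run : ∀ i, IsOptDA (X i) (h i) (Gh i) (η i) (g i) (Z i) (W i)

theorem ConvexOn.add_fderiv_sub_le {F : Type*} [NormedAddCommGroup F] [NormedSpace ℝ F]
    {X : Set F} {f : F → ℝ} {f' : F →L[ℝ] ℝ} {x p : F}
    (hf : ConvexOn ℝ X f) (hx : x ∈ X) (hp : p ∈ X) (hf' : HasFDerivAt f f' x) :
    f x + f' (p - x) ≤ f p := by
  have hline : ConvexOn ℝ (Set.Icc (0 : ℝ) 1) (f ∘ AffineMap.lineMap x p) :=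
    (hf.comp_affineMap _).subset (hf.1.mapsTo_lineMap hx hp) (convex_Icc 0 1)
  have hderiv : HasDerivAt (f ∘ AffineMap.lineMap x p) (f' (p - x)) (0 : ℝ) :=
    hf'.comp_hasDerivAt_of_eq 0 AffineMap.hasDerivAt_lineMap
      (AffineMap.lineMap_apply_zero x p).symm
  have hslope := hline.le_slope_of_hasDerivAt (by simp) (by simp) zero_lt_one hderiv
  rw [slope_def_field] at hslope
  simp only [Function.comp_apply, AffineMap.lineMap_apply_zero, AffineMap.lineMap_apply_one,
    sub_zero, div_one] at hslope
  linarith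

theorem IsMinOn.fderiv_sub_nonneg {F : Type*} [NormedAddCommGroup F] [NormedSpace ℝ F]
    {X : Set F} {f : F → ℝ} {f' : F →L[ℝ] ℝ} {x p : F}
    (hmin : IsMinOn f X x) (hX : Convex ℝ X) (hx : x ∈ X) (hp : p ∈ X)
    (hf' : HasFDerivAt f f' x) : 0 ≤ f' (p - x) :=
  hmin.localize.hasFDerivWithinAt_nonneg hf'.hasFDerivWithinAt
    (sub_mem_posTangentConeAt_of_segment_subset (hX.segment_subset hx hp))

section

variable {F : Type*} [NormedAddCommGroup F] [InnerProductSpace ℝ F]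

theorem breg_sub_breg_sub_breg (h : F → ℝ) (Gh : F → F) (p x y : F) :
    breg h Gh p x - breg h Gh p y - breg h Gh y x = ⟪Gh y - Gh x, p - y⟫ := by
  simp only [breg, inner_sub_left, inner_sub_right]
  ring

theorem real_inner_le_sq_norm_div_add {η : ℝ} (hη : 0 < η) (u v : F) :
    ⟪u, v⟫ ≤ ‖u‖ ^ 2 / η + η * ‖v‖ ^ 2 / 4 := by
  have hsq : 0 ≤ (‖u‖ - η * ‖v‖ / 2) ^ 2 / η := by positivity
  have hexp :
      (‖u‖ - η * ‖v‖ / 2) ^ 2 / η = ‖u‖ ^ 2 / η - ‖u‖ * ‖v‖ + η * ‖v‖ ^ 2 / 4 := by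
    field_simp
    ring
  linarith [real_inner_le_norm u v]

namespace IsRegularizer

variable {X : Set F} {h : F → ℝ} {Gh : F → F}

theorem continuous (hreg : IsRegularizer X h Gh) : Continuous h :=
  continuous_iff_continuousAt.2 fun x => (hreg.grad x).continuousAt

theorem breg_nonneg (hreg : IsRegularizer X h Gh) (p x : F) : 0 ≤ breg h Gh p x := by
  have := hreg.convex.add_fderiv_sub_le (Set.mem_univ x) (Set.mem_univ p) (hreg.grad x)
  rw [innerSL_apply_apply] at this
  rw [breg]
  linarith

theorem sq_norm_sub_div_two_le_breg (hreg : IsRegularizer X h Gh) {p x : F} (hp : p ∈ X)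
    (hx : x ∈ X) : ‖p - x‖ ^ 2 / 2 ≤ breg h Gh p x := by
  have hderiv : HasFDerivAt (fun z => h z - 1 / (2 : ℝ) * ‖z‖ ^ 2)
      (innerSL ℝ (Gh x) - (1 / (2 : ℝ)) • (2 • innerSL ℝ x)) x :=
    (hreg.grad x).sub ((hasStrictFDerivAt_norm_sq x).hasFDerivAt.const_mul _)
  have := (strongConvexOn_iff_convex.mp hreg.strong).add_fderiv_sub_le hx hp hderiv
  simp only [sub_apply, smul_apply, innerSL_apply_apply, smul_eq_mul, nsmul_eq_mul,
    inner_sub_right, real_inner_self_eq_norm_sq] at this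
  rw [breg, norm_sub_sq_real, inner_sub_right, real_inner_comm]
  push_cast at this
  linarith

theorem hasFDerivAt_breg (hreg : IsRegularizer X h Gh) (x z : F) :
    HasFDerivAt (fun q => breg h Gh q z) (innerSL ℝ (Gh x) - innerSL ℝ (Gh z)) x := by
  have hbreg :
      (fun q => breg h Gh q z) = fun q => h q - h z - (⟪Gh z, q⟫ - ⟪Gh z, z⟫) := by
    funext q
    rw [breg, inner_sub_right]
  rw [hbreg]
  exact ((hreg.grad x).sub_const _).sub ((innerSL ℝ (Gh z)).hasFDerivAt.sub_const _)

end IsRegularizer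

namespace IsOptDA

variable {X : Set F} {h : F → ℝ} {Gh : F → F} {η : ℕ → ℝ} {g : ℕ → F} {Z W : ℕ → F}

theorem base_opt_ineq (hrun : IsOptDA X h Gh η g Z W) (hX : Convex ℝ X)
    (hreg : IsRegularizer X h Gh) {t : ℕ} (ht : 1 ≤ t) {p : F} (hp : p ∈ X) :
    ⟪∑ s ∈ Ico 1 t, g s, Z t⟫ + η t * h (Z t) + η t * breg h Gh p (Z t)
      ≤ ⟪∑ s ∈ Ico 1 t, g s, p⟫ + η t * h p := by
  set G := ∑ s ∈ Ico 1 t, g s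
  have hderiv : HasFDerivAt (fun q => ⟪G, q⟫ + η t * h q)
      (innerSL ℝ G + η t • innerSL ℝ (Gh (Z t))) (Z t) :=
    (innerSL ℝ G).hasFDerivAt.add ((hreg.grad (Z t)).const_mul (η t))
  have hfirst := (isMinOn_iff.2 (hrun.base_min t ht)).fderiv_sub_nonneg hX
    (hrun.base_mem t ht) hp hderiv
  simp only [add_apply, smul_apply, innerSL_apply_apply, smul_eq_mul, inner_sub_right]
    at hfirst
  rw [breg, inner_sub_right]
  linarith

theorem lead_three_point (hrun : IsOptDA X h Gh η g Z W) (hX : Convex ℝ X)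
    (hreg : IsRegularizer X h Gh) {t : ℕ} (ht : 1 ≤ t) {p : F} (hp : p ∈ X) :
    ⟪g (t - 1), W t - p⟫
      ≤ η t * (breg h Gh p (Z t) - breg h Gh p (W t) - breg h Gh (W t) (Z t)) := by
  have hderiv : HasFDerivAt (fun q => ⟪g (t - 1), q⟫ + η t * breg h Gh q (Z t))
      (innerSL ℝ (g (t - 1)) + η t • (innerSL ℝ (Gh (W t)) - innerSL ℝ (Gh (Z t))))
      (W t) :=
    (innerSL ℝ (g (t - 1))).hasFDerivAt.add ((hreg.hasFDerivAt_breg (W t) (Z t)).const_mul _)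
  have hfirst := (isMinOn_iff.2 (hrun.lead_min t ht)).fderiv_sub_nonneg hX
    (hrun.lead_mem t ht) hp hderiv
  simp only [add_apply, smul_apply, sub_apply, innerSL_apply_apply, smul_eq_mul] at hfirst
  rw [breg_sub_breg_sub_breg, inner_sub_left, ← neg_sub p, inner_neg_right]
  linarith

theorem h_base_one_le (hrun : IsOptDA X h Gh η g Z W) {p : F} (hp : p ∈ X) :
    h (Z 1) ≤ h p := by
  have := hrun.base_min 1 le_rfl p hp
  simp only [Ico_self, sum_empty, inner_zero_left, zero_add] at this
  exact le_of_mul_le_mul_left this (hrun.eta_pos 1 le_rfl)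

/-- The "be-the-leader" inequality of dual averaging. -/
theorem sum_add_breg_le (hrun : IsOptDA X h Gh η g Z W) (hX : Convex ℝ X)
    (hreg : IsRegularizer X h Gh) (T : ℕ) {p : F} (hp : p ∈ X) :
    ∑ t ∈ Icc 1 T, (⟪g t, Z (t + 1)⟫ + η t * breg h Gh (Z (t + 1)) (Z t))
        + η (T + 1) * breg h Gh p (Z (T + 1))
      ≤ ⟪∑ t ∈ Icc 1 T, g t, p⟫ + η (T + 1) * (h p - h (Z 1)) := by
  induction T generalizing p with
  | zero =>
    have := hrun.base_opt_ineq hX hreg le_rfl hp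
    simp only [Ico_self, sum_empty, inner_zero_left, zero_add] at this
    simp only [zero_add, Icc_eq_empty_of_lt one_pos, sum_empty, inner_zero_left]
    linarith
  | succ T ih =>
    have hZ : Z (T + 1 + 1) ∈ X := hrun.base_mem (T + 1 + 1) (by omega)
    have hopt := hrun.base_opt_ineq hX hreg (t := T + 1 + 1) (by omega) hp
    have hmono : η (T + 1) * (h (Z (T + 1 + 1)) - h (Z 1))
        ≤ η (T + 1 + 1) * (h (Z (T + 1 + 1)) - h (Z 1)) :=
      mul_le_mul_of_nonneg_right (hrun.eta_mono (T + 1) (by omega))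
        (sub_nonneg.2 (hrun.h_base_one_le hZ))
    have hlead := ih hZ
    rw [Ico_add_one_right_eq_Icc, sum_Icc_succ_top (by omega), inner_add_left,
      inner_add_left] at hopt
    rw [sum_Icc_succ_top (by omega), sum_Icc_succ_top (by omega), inner_add_left]
    linarith

/-- The optimistic step absorbs `g (t - 1)` by the three-point inequality; Young's inequality
pays for the prediction error `g t - g (t - 1)` with the Bregman terms, which are at least half
the squared moves. -/
theorem inner_sub_le_round (hrun : IsOptDA X h Gh η g Z W) (hX : Convex ℝ X)
    (hreg : IsRegularizer X h Gh) {t : ℕ} (ht : 1 ≤ t) (hη : 1 ≤ η t) {a : F} :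
    ⟪g t, W t - a⟫
      ≤ ‖g t - g (t - 1)‖ ^ 2 / η t - (‖Z (t + 1) - W t‖ ^ 2 + ‖W t - Z t‖ ^ 2) / 4
        + (⟪g t, Z (t + 1)⟫ + η t * breg h Gh (Z (t + 1)) (Z t)) - ⟪g t, a⟫ := by
  have hZ : Z (t + 1) ∈ X := hrun.base_mem (t + 1) (by omega)
  have hW : W t ∈ X := hrun.lead_mem t ht
  have hthree := hrun.lead_three_point hX hreg ht hZ
  have hyoung := real_inner_le_sq_norm_div_add (η := η t) (by linarith)
    (g t - g (t - 1)) (W t - Z (t + 1))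
  rw [norm_sub_rev (W t)] at hyoung
  have hη₀ : 0 ≤ η t := by linarith
  have hb₁ := mul_le_mul_of_nonneg_left (hreg.sq_norm_sub_div_two_le_breg hZ hW) hη₀
  have hb₂ := mul_le_mul_of_nonneg_left
    (hreg.sq_norm_sub_div_two_le_breg hW (hrun.base_mem t ht)) hη₀
  have hsplit : ⟪g t, W t - a⟫ = ⟪g t - g (t - 1), W t - Z (t + 1)⟫
      + ⟪g (t - 1), W t - Z (t + 1)⟫ + ⟪g t, Z (t + 1)⟫ - ⟪g t, a⟫ := by
    simp only [inner_sub_left, inner_sub_right]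
    ring
  nlinarith [mul_le_mul_of_nonneg_right hη (sq_nonneg ‖Z (t + 1) - W t‖),
    mul_le_mul_of_nonneg_right hη (sq_nonneg ‖W t - Z t‖)]

theorem sum_inner_sub_le (hrun : IsOptDA X h Gh η g Z W) (hX : Convex ℝ X)
    (hreg : IsRegularizer X h Gh) (hη : ∀ t, 1 ≤ η t) (T : ℕ) {a : F} (ha : a ∈ X) :
    ∑ t ∈ Icc 1 T, ⟪g t, W t - a⟫
      ≤ η (T + 1) * (h a - h (Z 1)) + ∑ t ∈ Icc 1 T, ‖g t - g (t - 1)‖ ^ 2 / η t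
        - (∑ t ∈ Icc 1 T, (‖Z (t + 1) - W t‖ ^ 2 + ‖W t - Z t‖ ^ 2)) / 4 := by
  have hround := sum_le_sum fun t (ht : t ∈ Icc 1 T) =>
    hrun.inner_sub_le_round hX hreg (mem_Icc.1 ht).1 (hη t) (a := a)
  have hleader := hrun.sum_add_breg_le hX hreg T ha
  have hbreg : 0 ≤ η (T + 1) * breg h Gh a (Z (T + 1)) :=
    mul_nonneg (by linarith [hη (T + 1)]) (hreg.breg_nonneg _ _)
  rw [sum_inner] at hleader
  simp only [sum_add_distrib, sum_sub_distrib, ← sum_div] at hround hleader ⊢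
  linarith

end IsOptDA

section AdaEta

variable (g : ℕ → F)

theorem one_le_adaEta (t : ℕ) : 1 ≤ adaEta g t :=
  Real.one_le_sqrt.2 (le_add_of_nonneg_right (sum_nonneg fun _ _ => sq_nonneg _))

theorem adaEta_mono : Monotone (adaEta g) := fun _ _ hst =>
  Real.sqrt_le_sqrt (add_le_add_right (sum_le_sum_of_subset_of_nonneg
    (Ico_subset_Ico_right hst) fun _ _ _ => sq_nonneg _) 1)

theorem adaEta_succ_sq (T : ℕ) :
    adaEta g (T + 1) ^ 2 = 1 + ∑ t ∈ Icc 1 T, ‖g t - g (t - 1)‖ ^ 2 := by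
  rw [adaEta, Real.sq_sqrt (by positivity), Ico_add_one_right_eq_Icc]

variable {g}

theorem adaEta_succ_le (hg : g 0 = 0) {m : ℕ → ℝ}
    (hm : ∀ t, 2 ≤ t → ‖g t - g (t - 1)‖ ^ 2 ≤ m t) (T : ℕ) :
    adaEta g (T + 1) ≤ √(1 + ‖g 1‖ ^ 2) + √(∑ t ∈ Icc 2 T, m t) := by
  have hm₀ : 0 ≤ ∑ t ∈ Icc 2 T, m t :=
    sum_nonneg fun t ht => (sq_nonneg _).trans (hm t (mem_Icc.1 ht).1)
  have hsum : ∑ t ∈ Icc 1 T, ‖g t - g (t - 1)‖ ^ 2 ≤ ‖g 1‖ ^ 2 + ∑ t ∈ Icc 2 T, m t := by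
    calc ∑ t ∈ Icc 1 T, ‖g t - g (t - 1)‖ ^ 2
        ≤ ∑ t ∈ insert 1 (Icc 2 T), ‖g t - g (t - 1)‖ ^ 2 :=
          sum_le_sum_of_subset_of_nonneg (fun t ht => by simp at ht ⊢; omega)
            fun _ _ _ => sq_nonneg _
      _ ≤ ‖g 1‖ ^ 2 + ∑ t ∈ Icc 2 T, m t := by
          rw [sum_insert (by simp), Nat.sub_self, hg, sub_zero]
          exact add_le_add_right (sum_le_sum fun t ht => hm t (mem_Icc.1 ht).1) _
  have ha := Real.sq_sqrt (by positivity : (0 : ℝ) ≤ 1 + ‖g 1‖ ^ 2)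
  have hb := Real.sq_sqrt hm₀
  rw [adaEta, Ico_add_one_right_eq_Icc, Real.sqrt_le_left (by positivity)]
  nlinarith [mul_nonneg (Real.sqrt_nonneg (1 + ‖g 1‖ ^ 2)) (Real.sqrt_nonneg (∑ t ∈ Icc 2 T, m t)),
    hsum]

theorem exists_sum_sq_div_adaEta_le {θ : ℝ} (hθ : 1 ≤ θ) {m : ℕ → ℝ}
    (hm : ∀ t, 2 ≤ t → ‖g t - g (t - 1)‖ ^ 2 ≤ m t) :
    ∃ D, ∀ T, ∑ t ∈ Icc 1 T, ‖g t - g (t - 1)‖ ^ 2 / adaEta g t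
      ≤ D + ∑ t ∈ Icc 2 T, m t / θ := by
  have hm₀ : ∀ t, 2 ≤ t → 0 ≤ m t / θ := fun t ht =>
    div_nonneg ((sq_nonneg _).trans (hm t ht)) (by linarith)
  -- Past the first round where the rate reaches `θ`, each term is at most `m t / θ`; if the rate
  -- never reaches `θ`, the whole sum is below `adaEta g (T + 1) ^ 2 ≤ θ ^ 2`.
  by_cases hcross : ∃ τ, θ ≤ adaEta g τ
  · obtain ⟨τ, hτ⟩ := hcross
    refine ⟨∑ t ∈ Icc 1 (τ + 1), ‖g t - g (t - 1)‖ ^ 2 / adaEta g t, fun T => ?_⟩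
    rw [← sum_filter_add_sum_filter_not (Icc 1 T) (· ≤ τ + 1)]
    refine add_le_add (sum_le_sum_of_subset_of_nonneg (fun t ht => ?_) fun t _ _ => ?_) ?_
    · simp only [mem_filter, mem_Icc] at ht ⊢
      omega
    · exact div_nonneg (sq_nonneg _) (zero_le_one.trans (one_le_adaEta g t))
    calc ∑ t ∈ Icc 1 T with ¬t ≤ τ + 1, ‖g t - g (t - 1)‖ ^ 2 / adaEta g t
        ≤ ∑ t ∈ Icc 1 T with ¬t ≤ τ + 1, m t / θ := sum_le_sum fun t ht => by
          simp only [mem_filter, mem_Icc] at ht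
          exact div_le_div₀ ((sq_nonneg _).trans (hm t (by omega))) (hm t (by omega))
            (by linarith) (hτ.trans (adaEta_mono g (by omega)))
      _ ≤ ∑ t ∈ Icc 2 T, m t / θ := sum_le_sum_of_subset_of_nonneg
          (fun t ht => by simp only [mem_filter, mem_Icc] at ht ⊢; omega)
          fun t ht _ => hm₀ t (mem_Icc.1 ht).1
  · push Not at hcross
    refine ⟨θ ^ 2, fun T => ?_⟩
    calc ∑ t ∈ Icc 1 T, ‖g t - g (t - 1)‖ ^ 2 / adaEta g t
        ≤ ∑ t ∈ Icc 1 T, ‖g t - g (t - 1)‖ ^ 2 :=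
          sum_le_sum fun t _ => div_le_self (sq_nonneg _) (one_le_adaEta g t)
      _ ≤ adaEta g (T + 1) ^ 2 := by rw [adaEta_succ_sq]; linarith
      _ ≤ θ ^ 2 := pow_le_pow_left₀ (zero_le_one.trans (one_le_adaEta g _)) (hcross _).le 2
      _ ≤ θ ^ 2 + ∑ t ∈ Icc 2 T, m t / θ :=
          le_add_of_nonneg_right (sum_nonneg fun t ht => hm₀ t (mem_Icc.1 ht).1)

end AdaEta

namespace IsOptDA

variable {X : Set F} {h : F → ℝ} {Gh : F → F} {g : ℕ → F} {Z W : ℕ → F}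

theorem exists_sum_inner_sub_le (hrun : IsOptDA X h Gh (adaEta g) g Z W) (hX : Convex ℝ X)
    (hreg : IsRegularizer X h Gh) {K θ : ℝ} (hK : 0 ≤ K) (hθ : 1 ≤ θ) {q : ℕ → ℝ}
    (hΔ : ∀ t, 2 ≤ t → ‖g t - g (t - 1)‖ ^ 2 ≤ K ^ 2 * q t) (H : ℝ) :
    ∃ C₀ C₁ : ℝ, ∀ T, ∀ a ∈ X, h a ≤ H →
      ∑ t ∈ Icc 1 T, ⟪g t, W t - a⟫
        ≤ C₀ + C₁ * √(∑ t ∈ Icc 2 T, q t) + K ^ 2 / θ * ∑ t ∈ Icc 2 T, q t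
          - (∑ t ∈ Icc 1 T, (‖Z (t + 1) - W t‖ ^ 2 + ‖W t - Z t‖ ^ 2)) / 4 := by
  obtain ⟨D, hD⟩ := exists_sum_sq_div_adaEta_le hθ hΔ
  refine ⟨(H - h (Z 1)) * √(1 + ‖g 1‖ ^ 2) + D, (H - h (Z 1)) * K, fun T a ha haH => ?_⟩
  have hregret := hrun.sum_inner_sub_le hX hreg (one_le_adaEta g) T ha
  have hrate := adaEta_succ_le hrun.g_zero hΔ T
  rw [← mul_sum, Real.sqrt_mul (sq_nonneg K), Real.sqrt_sq hK] at hrate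
  have hadapt := hD T
  rw [← sum_div, ← mul_sum, mul_div_right_comm] at hadapt
  have hgrowth : adaEta g (T + 1) * (h a - h (Z 1))
      ≤ (√(1 + ‖g 1‖ ^ 2) + K * √(∑ t ∈ Icc 2 T, q t)) * (H - h (Z 1)) :=
    mul_le_mul hrate (by linarith) (sub_nonneg.2 (hrun.h_base_one_le ha))
      (by positivity)
  linarith

end IsOptDA

end

theorem sum_sq_norm_sub_sub_one_le {F : Type*} [SeminormedAddCommGroup F] (W Z : ℕ → F)
    (T : ℕ) :
    ∑ t ∈ Icc 2 T, ‖W t - W (t - 1)‖ ^ 2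
      ≤ 2 * ∑ t ∈ Icc 1 T, (‖Z (t + 1) - W t‖ ^ 2 + ‖W t - Z t‖ ^ 2) := by
  have htriangle :
      ∀ t, ‖W t - W (t - 1)‖ ^ 2 ≤ 2 * ‖W t - Z t‖ ^ 2 + 2 * ‖Z t - W (t - 1)‖ ^ 2 := fun t => by
    nlinarith [norm_sub_le_norm_sub_add_norm_sub (W t) (Z t) (W (t - 1)),
      norm_nonneg (W t - W (t - 1)), sq_nonneg (‖W t - Z t‖ - ‖Z t - W (t - 1)‖)]
  have hshift :
      ∑ t ∈ Icc 2 T, ‖Z t - W (t - 1)‖ ^ 2 ≤ ∑ t ∈ Icc 1 T, ‖Z (t + 1) - W t‖ ^ 2 := by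
    have hreindex := sum_Ico_add' (fun t => ‖Z t - W (t - 1)‖ ^ 2) 1 T 1
    simp only [Nat.add_sub_cancel, Nat.reduceAdd, Ico_add_one_right_eq_Icc] at hreindex
    rw [← hreindex]
    exact sum_le_sum_of_subset_of_nonneg Ico_subset_Icc_self fun _ _ _ => sq_nonneg _
  have hsub : ∑ t ∈ Icc 2 T, ‖W t - Z t‖ ^ 2 ≤ ∑ t ∈ Icc 1 T, ‖W t - Z t‖ ^ 2 :=
    sum_le_sum_of_subset_of_nonneg (Icc_subset_Icc_left one_le_two) fun _ _ _ => sq_nonneg _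
  calc ∑ t ∈ Icc 2 T, ‖W t - W (t - 1)‖ ^ 2
      ≤ ∑ t ∈ Icc 2 T, (2 * ‖W t - Z t‖ ^ 2 + 2 * ‖Z t - W (t - 1)‖ ^ 2) :=
        sum_le_sum fun t _ => htriangle t
    _ ≤ 2 * ∑ t ∈ Icc 1 T, (‖Z (t + 1) - W t‖ ^ 2 + ‖W t - Z t‖ ^ 2) := by
        rw [sum_add_distrib, ← mul_sum, ← mul_sum, sum_add_distrib]
        linarith

omit [DecidableEq ι] [∀ i, InnerProductSpace ℝ (E i)] [∀ i, FiniteDimensional ℝ (E i)] in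
theorem sq_norm_profileAt_sub (W : ∀ i, ℕ → E i) (t s : ℕ) :
    ‖profileAt W t - profileAt W s‖ ^ 2 = ∑ i, ‖W i t - W i s‖ ^ 2 :=
  PiLp.norm_sq_eq_of_L2 E _

omit [DecidableEq ι] [∀ i, InnerProductSpace ℝ (E i)] [∀ i, FiniteDimensional ℝ (E i)] in
theorem sum_sq_norm_profileAt_sub_le (W Z : ∀ i, ℕ → E i) (T : ℕ) :
    ∑ t ∈ Icc 2 T, ‖profileAt W t - profileAt W (t - 1)‖ ^ 2
      ≤ 2 * ∑ i, ∑ t ∈ Icc 1 T, (‖Z i (t + 1) - W i t‖ ^ 2 + ‖W i t - Z i t‖ ^ 2) := by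
  simp only [sq_norm_profileAt_sub]
  rw [sum_comm, mul_sum]
  exact sum_le_sum fun i _ => sum_sq_norm_sub_sub_one_le (W i) (Z i) T

namespace AllOptDA

variable {X : ∀ i, Set (E i)} {V : ∀ i, PiLp 2 E → E i} {h : ∀ i, E i → ℝ}
  {Gh : ∀ i, E i → E i} {η : ∀ i, ℕ → ℝ} {g : ∀ i, ℕ → E i} {Z W : ∀ i, ℕ → E i}

omit [DecidableEq ι] [∀ i, FiniteDimensional ℝ (E i)] in
theorem sq_norm_feedback_sub_le (setup : AllOptDA X V h Gh η g Z W) {i : ι} {K : NNReal}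
    (hK : LipschitzWith K (V i)) {t : ℕ} (ht : 2 ≤ t) :
    ‖g i t - g i (t - 1)‖ ^ 2 ≤ (K : ℝ) ^ 2 * ‖profileAt W t - profileAt W (t - 1)‖ ^ 2 := by
  rw [setup.feedback i t (by omega), setup.feedback i (t - 1) (by omega), ← dist_eq_norm,
    ← dist_eq_norm, ← mul_pow]
  exact pow_le_pow_left₀ dist_nonneg (hK.dist_le_mul _ _) 2

omit [∀ i, FiniteDimensional ℝ (E i)] in
theorem regret_le_sum_inner (setup : AllOptDA X V h Gh η g Z W) {L : ι → PiLp 2 E → ℝ}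
    (game : ConvexGame X L V) {a : PiLp 2 E} (ha : ∀ i, a i ∈ X i) (T : ℕ) :
    ∑ i, ∑ t ∈ Icc 1 T,
        (L i (profileAt W t) - L i (WithLp.toLp 2 (Function.update (profileAt W t) i (a i))))
      ≤ ∑ i, ∑ t ∈ Icc 1 T, ⟪g i t, W i t - a i⟫ :=
  sum_le_sum fun i _ => sum_le_sum fun t ht => by
    have ht₁ := (mem_Icc.1 ht).1
    have hsub :=
      game.subgrad i (profileAt W t) (fun j => (setup.run j).lead_mem t ht₁) (a i) (ha i)
    have hW : (profileAt W t) i = W i t := rfl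
    rw [hW, ← neg_sub (W i t), inner_neg_right] at hsub
    rw [setup.feedback i t ht₁]
    linarith

end AllOptDA

/-- Theorem 2: if all players run OptDA with the adaptive learning rate in a continuous
convex smooth game, the social regret over any bounded comparator set is bounded. -/
theorem social_regret_bounded
    (X : ∀ i, Set (E i)) (L : ι → PiLp 2 E → ℝ) (V : ∀ i, PiLp 2 E → E i)
    (game : ConvexGame X L V)
    (h : ∀ i, E i → ℝ) (Gh : ∀ i, E i → E i)
    (η : ∀ i, ℕ → ℝ) (g : ∀ i, ℕ → E i) (Z W : ∀ i, ℕ → E i)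
    (setup : AllOptDA X V h Gh η g Z W)
    (K : Set (PiLp 2 E)) (hKbdd : Bornology.IsBounded K)
    (hKsub : ∀ a ∈ K, ∀ i, a i ∈ X i) :
    ∃ C : ℝ, ∀ T : ℕ, 1 ≤ T → ∀ a ∈ K,
      ∑ i, ∑ t ∈ Finset.Icc 1 T,
        (L i (profileAt W t) - L i (WithLp.toLp 2 (Function.update (profileAt W t) i (a i)))) ≤ C := by
  obtain rfl : η = fun i => adaEta (g i) := funext fun i => funext (setup.rate i)
  choose lip hlip using game.lipschitzV
  -- With this threshold the gradient-variation terms of all players cost at most `Q / 16`, while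
  -- the movement terms give back at least `Q / 8`.
  set θ : ℝ := 1 + 16 * ∑ i, (lip i : ℝ) ^ 2 with hθ
  have hθ₁ : 1 ≤ θ := le_add_of_nonneg_right (by positivity)
  have hlip_div : (∑ i, (lip i : ℝ) ^ 2) / θ ≤ 1 / 16 := by
    rw [div_le_iff₀ (by positivity)]
    linarith
  have hbound : ∀ i, ∃ H, ∀ a ∈ K, h i (a i) ≤ H := fun i => by
    obtain ⟨H, hH⟩ := hKbdd.isCompact_closure.bddAbove_image
      ((setup.reg i).continuous.comp (PiLp.continuous_apply 2 E i)).continuousOn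
    exact ⟨H, fun a ha => hH ⟨a, subset_closure ha, rfl⟩⟩
  choose H hH using hbound
  have hplayer := fun i => (setup.run i).exists_sum_inner_sub_le (game.convexSet i)
    (setup.reg i) (lip i).coe_nonneg hθ₁ (fun t ht => setup.sq_norm_feedback_sub_le (hlip i) ht)
    (H i)
  choose C₀ C₁ hC using hplayer
  refine ⟨∑ i, C₀ i + 4 * (∑ i, C₁ i) ^ 2, fun T _ a ha => ?_⟩
  have hQ := sum_sq_norm_profileAt_sub_le W Z T
  set Q := ∑ t ∈ Icc 2 T, ‖profileAt W t - profileAt W (t - 1)‖ ^ 2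
  set Φ := fun i => ∑ t ∈ Icc 1 T, (‖Z i (t + 1) - W i t‖ ^ 2 + ‖W i t - Z i t‖ ^ 2)
  have hQ₀ : 0 ≤ Q := sum_nonneg fun _ _ => sq_nonneg _
  have hsqrt := Real.sq_sqrt hQ₀
  calc _ ≤ ∑ i, ∑ t ∈ Icc 1 T, ⟪g i t, W i t - a i⟫ :=
        setup.regret_le_sum_inner game (hKsub a ha) T
    _ ≤ ∑ i, (C₀ i + C₁ i * √Q + (lip i : ℝ) ^ 2 / θ * Q - Φ i / 4) :=
        sum_le_sum fun i _ => hC i T (a i) (hKsub a ha i) (hH i a ha)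
    _ ≤ _ := by
        simp only [sum_add_distrib, sum_sub_distrib, ← sum_mul, ← sum_div]
        nlinarith [mul_le_mul_of_nonneg_right hlip_div hQ₀, sq_nonneg (√Q - 8 * ∑ i, C₁ i)]
end
end

section
/- (Template descent inequality for OptDA.) Let (X_t), (X_{t+1/2}) be OptDA iterates in X with feedback (g_t) and positive nondecreasing learning rates (η_t). For t ≥ 1 define the Fenchel coupling F_t(p) = h(p) − h(X_t) + (1/η_t)·⟨Σ_{s=1}^{t−1} g_s, p − X_t⟩. Then for every t ≥ 1 and every p ∈ X: η_{t+1} F_{t+1}(p) ≤ η_t F_t(p) − ⟨g_t, X_{t+1/2} − p⟩ + (η_{t+1} − η_t)(h(p) − h(X_1)) + ⟨g_t − g_{t−1}, X_{t+1/2} − X_{t+1}⟩ − η_t D(X_{t+1}, X_{t+1/2}) − η_t D(X_{t+1/2}, X_t). -/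
/-!
The gap between the two sides is exactly a sum of three nonnegative quantities. Two are the
first-order optimality conditions of the OptDA steps, tested at `X_{t+1}`:
`⟪S_t + η_t ∇h(X_t), X_{t+1} - X_t⟫ ≥ 0` and
`⟪g_{t-1} + η_t (∇h(X_{t+1/2}) - ∇h(X_t)), X_{t+1} - X_{t+1/2}⟫ ≥ 0`,
where `S_t = ∑_{s<t} g_s`; the third is `(η_{t+1} - η_t)(h(X_{t+1}) - h(X_1)) ≥ 0`, as `X_1`
minimizes `h`. The Bregman three-point identity turns the second condition into the divergence
terms of the claim.
-/

open scoped RealInnerProductSpace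
open Filter Finset Topology

noncomputable section

section FirstOrder

variable {F : Type*} [NormedAddCommGroup F] [InnerProductSpace ℝ F]

theorem inner_sub_nonneg_of_isMinOn {X : Set F} (hX : Convex ℝ X) {f : F → ℝ} {G x p : F}
    (hf : HasFDerivAt f (innerSL ℝ G) x) (hmin : IsMinOn f X x) (hx : x ∈ X) (hp : p ∈ X) :
    0 ≤ ⟪G, p - x⟫ := by
  simpa using hmin.localize.hasFDerivWithinAt_nonneg hf.hasFDerivWithinAt
    (sub_mem_posTangentConeAt_of_segment_subset (hX.segment_subset hx hp))

theorem inner_add_mul_inner_nonneg_of_forall_le {X : Set F} (hX : Convex ℝ X) {f : F → ℝ}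
    {G y x p : F} {c : ℝ} (hf : HasFDerivAt f (innerSL ℝ G) x) (hx : x ∈ X)
    (hmin : ∀ q ∈ X, ⟪y, x⟫ + c * f x ≤ ⟪y, q⟫ + c * f q) (hp : p ∈ X) :
    0 ≤ ⟪y, p - x⟫ + c * ⟪G, p - x⟫ := by
  have hobj : HasFDerivAt (fun q ↦ ⟪y, q⟫ + c * f q) (innerSL ℝ (y + c • G)) x := by
    rw [map_add, map_smul]
    exact (innerSL ℝ y).hasFDerivAt.add (hf.const_mul c)
  simpa [inner_add_left, real_inner_smul_left] using
    inner_sub_nonneg_of_isMinOn hX hobj (isMinOn_iff.2 hmin) hx hp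

theorem hasFDerivAt_breg_left {h : F → ℝ} {Gh : F → F} {q : F}
    (hq : HasFDerivAt h (innerSL ℝ (Gh q)) q) (x : F) :
    HasFDerivAt (fun p ↦ breg h Gh p x) (innerSL ℝ (Gh q - Gh x)) q := by
  have hlin : HasFDerivAt (fun p ↦ ⟪Gh x, p - x⟫) (innerSL ℝ (Gh x)) q := by
    simpa [inner_sub_right] using (innerSL ℝ (Gh x)).hasFDerivAt.sub_const ⟪Gh x, x⟫
  rw [map_sub]
  exact (hq.sub_const (h x)).sub hlin

theorem breg_three_point (h : F → ℝ) (Gh : F → F) (p x y : F) :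
    breg h Gh p x = breg h Gh p y + breg h Gh y x + ⟪Gh y - Gh x, p - y⟫ := by
  simp only [breg, inner_sub_left, inner_sub_right]
  ring

end FirstOrder

theorem IsOptDA.isMinOn_one {F : Type*} [NormedAddCommGroup F] [InnerProductSpace ℝ F]
    {X : Set F} {h : F → ℝ} {Gh : F → F} {η : ℕ → ℝ} {g : ℕ → F} {Z W : ℕ → F}
    (hrun : IsOptDA X h Gh η g Z W) : IsMinOn h X (Z 1) := by
  refine isMinOn_iff.2 fun p hp ↦ ?_
  have hmin := hrun.base_min 1 le_rfl p hp
  simp only [Finset.Ico_self, Finset.sum_empty, inner_zero_left, zero_add] at hmin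
  exact le_of_mul_le_mul_left hmin (hrun.eta_pos 1 le_rfl)

theorem optda_template_descent_general
    {F : Type*} [NormedAddCommGroup F] [InnerProductSpace ℝ F]
    (X : Set F) (hXcv : Convex ℝ X)
    (h : F → ℝ) (Gh : F → F) (hreg : IsRegularizer X h Gh)
    (η : ℕ → ℝ) (g : ℕ → F) (Z W : ℕ → F)
    (hrun : IsOptDA X h Gh η g Z W) :
    ∀ t : ℕ, 1 ≤ t → ∀ p ∈ X,
      η (t + 1) *
          (h p - h (Z (t + 1)) +
            (1 / η (t + 1)) * ⟪∑ s ∈ Finset.Ico 1 (t + 1), g s, p - Z (t + 1)⟫)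
        ≤ η t * (h p - h (Z t) + (1 / η t) * ⟪∑ s ∈ Finset.Ico 1 t, g s, p - Z t⟫)
            - ⟪g t, W t - p⟫
            + (η (t + 1) - η t) * (h p - h (Z 1))
            + ⟪g t - g (t - 1), W t - Z (t + 1)⟫
            - η t * breg h Gh (Z (t + 1)) (W t)
            - η t * breg h Gh (W t) (Z t) := by
  intro t ht p hp
  have hZ : Z t ∈ X := hrun.base_mem t ht
  have hZ' : Z (t + 1) ∈ X := hrun.base_mem (t + 1) (by omega)
  have hW : W t ∈ X := hrun.lead_mem t ht
  have base_opt := inner_add_mul_inner_nonneg_of_forall_le hXcv (hreg.grad (Z t)) hZ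
    (hrun.base_min t ht) hZ'
  have lead_opt := inner_add_mul_inner_nonneg_of_forall_le hXcv
    (hasFDerivAt_breg_left (hreg.grad (W t)) (Z t)) hW (hrun.lead_min t ht) hZ'
  have rate_gap : 0 ≤ (η (t + 1) - η t) * (h (Z (t + 1)) - h (Z 1)) :=
    mul_nonneg (sub_nonneg.2 (hrun.eta_mono t ht)) (sub_nonneg.2 (hrun.isMinOn_one hZ'))
  have three_point := breg_three_point h Gh (Z (t + 1)) (Z t) (W t)
  have breg_base : breg h Gh (Z (t + 1)) (Z t)
      = h (Z (t + 1)) - h (Z t) - ⟪Gh (Z t), Z (t + 1) - Z t⟫ := rfl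
  rw [mul_add, mul_add, ← mul_assoc, ← mul_assoc, mul_one_div_cancel (hrun.eta_pos t ht).ne',
    mul_one_div_cancel (hrun.eta_pos (t + 1) (by omega)).ne', sum_Ico_succ_top ht]
  simp only [inner_add_left, inner_sub_left, inner_sub_right]
    at base_opt lead_opt three_point breg_base ⊢
  linear_combination base_opt + lead_opt + rate_gap + η t * breg_base - η t * three_point

/-- Template descent inequality for OptDA (Lemma 1, OptDA case). -/
theorem optda_template_descent
    {F : Type*} [NormedAddCommGroup F] [InnerProductSpace ℝ F]
    (X : Set F) (hXne : X.Nonempty) (hXcl : IsClosed X) (hXcv : Convex ℝ X)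
    (h : F → ℝ) (Gh : F → F) (hreg : IsRegularizer X h Gh)
    (η : ℕ → ℝ) (g : ℕ → F) (Z W : ℕ → F)
    (hrun : IsOptDA X h Gh η g Z W) :
    ∀ t : ℕ, 1 ≤ t → ∀ p ∈ X,
      η (t + 1) *
          (h p - h (Z (t + 1)) +
            (1 / η (t + 1)) * ⟪∑ s ∈ Finset.Ico 1 (t + 1), g s, p - Z (t + 1)⟫)
        ≤ η t * (h p - h (Z t) + (1 / η t) * ⟪∑ s ∈ Finset.Ico 1 t, g s, p - Z t⟫)
            - ⟪g t, W t - p⟫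
            + (η (t + 1) - η t) * (h p - h (Z 1))
            + ⟪g t - g (t - 1), W t - Z (t + 1)⟫
            - η t * breg h Gh (Z (t + 1)) (W t)
            - η t * breg h Gh (W t) (Z t) :=
  optda_template_descent_general X hXcv h Gh hreg η g Z W hrun
end
end
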